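/- arXiv:math/0404432 — 2 statements merged into one kernel-verified Lean document; each statement's English description precedes it below -/
import Mathlib

section
/- Let μ be a probability measure on a measurable space Ω, let p, b, f be measurable sets with μ(p) > 0 and μ(p ∩ b) > 0, and let ε₁, ε₃ ∈ [0,1) with μ[f | p] = ε₁ and μ[b | p] = 1 − ε₃. Then μ[f | p ∩ b] ≤ ε₁ / (1 − ε₃). -/
open MeasureTheory

noncomputable def condProb {Ω : Type*} [MeasurableSpace Ω] (μ : Measure Ω) (s t : Set Ω) : ℝ :=
  (μ (s ∩ t)).toReal / (μ t).toReal

theorem pearl_bound {Ω : Type*} [MeasurableSpace Ω] (μ : Measure Ω)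
    [IsProbabilityMeasure μ] (p b f : Set Ω) (ε₁ ε₃ : ℝ)
    (hp : MeasurableSet p) (hb : MeasurableSet b) (hf : MeasurableSet f)
    (hμp : 0 < μ p) (hμpb : 0 < μ (p ∩ b))
    (hε₁0 : 0 ≤ ε₁) (hε₁1 : ε₁ < 1) (hε₃0 : 0 ≤ ε₃) (hε₃1 : ε₃ < 1)
    (h1 : condProb μ f p = ε₁) (h3 : condProb μ b p = 1 - ε₃) :
    condProb μ f (p ∩ b) ≤ ε₁ / (1 - ε₃) := by
  have hfinP : μ p ≠ ⊤ := measure_ne_top μ p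
  have hfinPB : μ (p ∩ b) ≠ ⊤ := measure_ne_top μ _
  have hP : (0:ℝ) < (μ p).toReal := ENNReal.toReal_pos hμp.ne' hfinP
  have hB : (0:ℝ) < (μ (p ∩ b)).toReal := ENNReal.toReal_pos hμpb.ne' hfinPB
  have hbp : μ (b ∩ p) = μ (p ∩ b) := by rw [Set.inter_comm]
  have hC : (μ (f ∩ (p ∩ b))).toReal ≤ (μ (f ∩ p)).toReal := by
    apply ENNReal.toReal_mono (measure_ne_top μ _)
    exact measure_mono (Set.inter_subset_inter_right _ Set.inter_subset_left)
  have key : ε₁ / (1 - ε₃) = (μ (f ∩ p)).toReal / (μ (p ∩ b)).toReal := by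
    rw [← h1, ← h3]
    unfold condProb
    rw [hbp]
    field_simp
  rw [key]
  unfold condProb
  exact div_le_div_of_nonneg_right hC hB.le
end

section
/- Let μ be a probability measure on a measurable space Ω and let p, b, f be measurable sets with μ(f) = 1/2, μ(p) = 1/2, and μ(p ∩ b) > 0. If p and b are conditionally independent given f, i.e. μ(p ∩ b ∩ f) · μ(f) = μ(p ∩ f) · μ(b ∩ f), then μ[f | p ∩ b] = μ[p | f] · μ[b | f] / μ[b | p]. -/
open MeasureTheory

section CondProb

variable {Ω : Type*} [MeasurableSpace Ω] (μ : Measure Ω)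

/-- Bayes' rule, valid in all degenerate cases through the convention `x / 0 = 0`. -/
theorem condProb_inter_div_condProb (p b f : Set Ω) :
    condProb μ (p ∩ b) f / condProb μ b p
      = condProb μ f (p ∩ b) * (μ p).toReal / (μ f).toReal := by
  unfold condProb
  rw [Set.inter_comm f, Set.inter_comm b p, div_div_eq_mul_div]
  ring

theorem condProb_inter_eq_mul_of_condIndep [IsFiniteMeasure μ] {p b f : Set Ω} (hf : μ f ≠ 0)
    (hCI : μ (p ∩ b ∩ f) * μ f = μ (p ∩ f) * μ (b ∩ f)) :
    condProb μ (p ∩ b) f = condProb μ p f * condProb μ b f := by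
  have hf' : (μ f).toReal ≠ 0 := ENNReal.toReal_ne_zero.mpr ⟨hf, measure_ne_top μ f⟩
  have hCI' : (μ (p ∩ b ∩ f)).toReal * (μ f).toReal
      = (μ (p ∩ f)).toReal * (μ (b ∩ f)).toReal := by
    rw [← ENNReal.toReal_mul, ← ENNReal.toReal_mul, hCI]
  unfold condProb
  field_simp
  linear_combination hCI'

end CondProb

theorem pearl_indifference_formula_general {Ω : Type*} [MeasurableSpace Ω] (μ : Measure Ω)
    [IsProbabilityMeasure μ] (p b f : Set Ω)
    (hμf : μ f = 1/2) (hμp : μ p = 1/2)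
    (hCI : μ (p ∩ b ∩ f) * μ f = μ (p ∩ f) * μ (b ∩ f)) :
    condProb μ f (p ∩ b) = condProb μ p f * condProb μ b f / condProb μ b p := by
  have hf : μ f ≠ 0 := by simp [hμf]
  have hf' : (μ f).toReal ≠ 0 := ENNReal.toReal_ne_zero.mpr ⟨hf, measure_ne_top μ f⟩
  have bayes := condProb_inter_div_condProb μ p b f
  rw [hμp, ← hμf, mul_div_assoc, div_self hf', mul_one] at bayes
  rw [← condProb_inter_eq_mul_of_condIndep μ hf hCI, bayes]

theorem pearl_indifference_formula {Ω : Type*} [MeasurableSpace Ω] (μ : Measure Ω)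
    [IsProbabilityMeasure μ] (p b f : Set Ω)
    (hp : MeasurableSet p) (hb : MeasurableSet b) (hf : MeasurableSet f)
    (hμf : μ f = 1/2) (hμp : μ p = 1/2) (hμpb : 0 < μ (p ∩ b))
    (hCI : μ (p ∩ b ∩ f) * μ f = μ (p ∩ f) * μ (b ∩ f)) :
    condProb μ f (p ∩ b) = condProb μ p f * condProb μ b f / condProb μ b p :=
  pearl_indifference_formula_general μ p b f hμf hμp hCI
end
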